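/- Let |ψ⟩ ∈ ℂ^{d₁} ⊗ ℂ^{d₂} be a unit vector. Then the partial transpose (on the second factor) of the rank-one projection |ψ⟩⟨ψ| is positive semidefinite if and only if |ψ⟩ is a product vector u ⊗ w. -/

import Mathlib

open scoped ComplexConjugate ComplexOrder

/-- The product (tensor) vector u ⊗ w in ℂ^{d₁} ⊗ ℂ^{d₂} ≅ ℂ^{d₁·d₂}. -/
noncomputable def tp {d₁ d₂ : ℕ} (u : EuclideanSpace ℂ (Fin d₁))
    (w : EuclideanSpace ℂ (Fin d₂)) : EuclideanSpace ℂ (Fin d₁ × Fin d₂) :=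
  WithLp.toLp 2 fun p : Fin d₁ × Fin d₂ => u p.1 * w p.2

/-- Partial transpose on the second tensor factor. -/
def ptrans {d₁ d₂ : ℕ} (X : Matrix (Fin d₁ × Fin d₂) (Fin d₁ × Fin d₂) ℂ) :
    Matrix (Fin d₁ × Fin d₂) (Fin d₁ × Fin d₂) ℂ :=
  Matrix.of fun p q => X (p.1, q.2) (q.1, p.2)

open Matrix

lemma ptrans_tp_mul_conj {d₁ d₂ : ℕ} (u : EuclideanSpace ℂ (Fin d₁))
    (w : EuclideanSpace ℂ (Fin d₂)) :
    ptrans (of fun p q => tp u w p * conj (tp u w q)) =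
      vecMulVec (fun p => u p.1 * conj (w p.2)) (star fun p => u p.1 * conj (w p.2)) := by
  ext p q
  simp only [ptrans, of_apply, vecMulVec_apply, tp, Pi.star_apply, map_mul, RCLike.star_def,
    Complex.conj_conj]
  ring

/-- Testing the partial transpose against a vector supported on the four entries of a 2 × 2
minor `m` of `ψ` gives `-2 |m|²`, so positivity forces `m = 0`. -/
lemma mul_eq_mul_of_posSemidef_ptrans {d₁ d₂ : ℕ} (ψ : EuclideanSpace ℂ (Fin d₁ × Fin d₂))
    (h : (ptrans (of fun p q => ψ p * conj (ψ q))).PosSemidef)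
    (i k : Fin d₁) (j l : Fin d₂) : ψ (i, j) * ψ (k, l) = ψ (i, l) * ψ (k, j) := by
  set m := ψ (i, j) * ψ (k, l) - ψ (i, l) * ψ (k, j) with hm
  set x : Fin d₁ × Fin d₂ → ℂ :=
    Pi.single (i, j) (conj (ψ (k, j))) + Pi.single (i, l) (conj (ψ (k, l)))
      - Pi.single (k, j) (conj (ψ (i, j))) - Pi.single (k, l) (conj (ψ (i, l))) with hx
  have hform : star x ⬝ᵥ ptrans (of fun p q => ψ p * conj (ψ q)) *ᵥ x =
      ((-(2 * Complex.normSq m) : ℝ) : ℂ) := by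
    simp only [hx, star_add, star_sub, ← Pi.single_star, mulVec_add, mulVec_sub, mulVec_single,
      dotProduct_add, dotProduct_sub, add_dotProduct, sub_dotProduct, single_dotProduct, ptrans,
      of_apply, RCLike.star_def, Complex.conj_conj, Pi.smul_apply, col_apply,
      MulOpposite.smul_eq_mul_unop, MulOpposite.unop_op]
    push_cast
    rw [← Complex.mul_conj, hm]
    simp only [map_sub, map_mul]
    ring
  have hnonneg := h.dotProduct_mulVec_nonneg x
  rw [hform, Complex.zero_le_real] at hnonneg
  have hm0 : m = 0 := Complex.normSq_eq_zero.mp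
    (le_antisymm (by linarith) (Complex.normSq_nonneg m))
  linear_combination hm0

lemma exists_eq_tp_of_mul_eq_mul {d₁ d₂ : ℕ} (ψ : EuclideanSpace ℂ (Fin d₁ × Fin d₂))
    (hminor : ∀ i k j l, ψ (i, j) * ψ (k, l) = ψ (i, l) * ψ (k, j)) :
    ∃ (u : EuclideanSpace ℂ (Fin d₁)) (w : EuclideanSpace ℂ (Fin d₂)), ψ = tp u w := by
  by_cases hzero : ∀ p, ψ p = 0
  · exact ⟨0, 0, by ext p; simp [hzero, tp]⟩
  push Not at hzero
  obtain ⟨⟨i₀, j₀⟩, hψ₀⟩ := hzero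
  refine ⟨WithLp.toLp 2 fun i => ψ (i, j₀) / ψ (i₀, j₀), WithLp.toLp 2 fun j => ψ (i₀, j), ?_⟩
  ext ⟨i, j⟩
  simp only [tp]
  field_simp
  linear_combination hminor i i₀ j j₀

theorem stmt9_general (d₁ d₂ : ℕ) (ψ : EuclideanSpace ℂ (Fin d₁ × Fin d₂)) :
    (ptrans (Matrix.of fun p q => ψ p * conj (ψ q))).PosSemidef ↔
      ∃ (u : EuclideanSpace ℂ (Fin d₁)) (w : EuclideanSpace ℂ (Fin d₂)), ψ = tp u w := by
  refine ⟨fun h => exists_eq_tp_of_mul_eq_mul ψ (mul_eq_mul_of_posSemidef_ptrans ψ h), ?_⟩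
  rintro ⟨u, w, rfl⟩
  rw [ptrans_tp_mul_conj]
  exact posSemidef_vecMulVec_self_star _

/-- the partial transpose of the rank-one projection |ψ⟩⟨ψ| of a
unit vector ψ is positive semidefinite iff ψ is a product vector. -/
theorem stmt9 (d₁ d₂ : ℕ) (ψ : EuclideanSpace ℂ (Fin d₁ × Fin d₂)) (hψ : ‖ψ‖ = 1) :
    (ptrans (Matrix.of fun p q => ψ p * conj (ψ q))).PosSemidef ↔
      ∃ (u : EuclideanSpace ℂ (Fin d₁)) (w : EuclideanSpace ℂ (Fin d₂)), ψ = tp u w :=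
  stmt9_general d₁ d₂ ψ
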